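/- For every ε > 0 there exists Q₀ such that for all real Q ≥ Q₀ and every nonempty finite set A of positive integers contained in [1, Q], the quotient set A/A satisfies |A/A| ≥ |A|²·exp((−2·log 2 − ε)·(log Q)/(log log Q)). -/

import Mathlib

/-!
Cauchy–Schwarz over the fibres of `(a, b) ↦ a / b` gives `|A|⁴ ≤ |A/A| · E`, where `E`
counts the solutions of `a / b = c / d`, i.e. of `a d = c b`, in `A`. This is the
multiplicative energy of `A`, which is at most `|A|² · max_{m ≤ Q²} d(m)` since a product
`m = a b` determines `a` among the divisors of `m`.

For the divisor bound, split the primes of `n ≤ Q` at `y = (log Q)^θ`: each exponent `k`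
satisfies `k + 1 ≤ 1 + log₂ n`, so the small primes contribute at most `(1 + log₂ Q)^y`, while
for `p > y`, `k + 1 ≤ 2^k ≤ (p^k)^(log 2 / log y)`, so the large primes contribute at most
`Q^(log 2 / log y) = exp ((log 2 / θ) · log Q / log log Q)`. With `θ < 1` close to `1` the
first factor is negligible. Passing from `Q²` back to `Q` costs the factor `2` in `2 log 2`.
-/

open Finset Real Filter
open scoped Combinatorics.Additive Pointwise

namespace Finset

theorem sq_card_le_card_image_mul_card_filter {α β : Type*} [DecidableEq β] (s : Finset α)
    (f : α → β) : #s ^ 2 ≤ #(s.image f) * #{x ∈ s ×ˢ s | f x.1 = f x.2} := by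
  have hfibres :
      ∑ b ∈ s.image f, #{a ∈ s | f a = b} ^ 2 = #{x ∈ s ×ˢ s | f x.1 = f x.2} := by
    rw [card_eq_sum_card_fiberwise (f := fun x => f x.1) (t := s.image f)
      fun x hx => mem_image_of_mem f (mem_product.1 (mem_filter.1 hx).1).1]
    refine sum_congr rfl fun b _ => ?_
    rw [sq, ← card_product]
    congr 1
    ext x
    simp only [mem_product, mem_filter]
    constructor
    · rintro ⟨⟨h1, h1b⟩, h2, h2b⟩
      exact ⟨⟨⟨h1, h2⟩, h1b.trans h2b.symm⟩, h1b⟩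
    · rintro ⟨⟨⟨h1, h2⟩, h12⟩, h1b⟩
      exact ⟨⟨h1, h1b⟩, h2, h12 ▸ h1b⟩
  calc #s ^ 2 = (∑ b ∈ s.image f, #{a ∈ s | f a = b}) ^ 2 := by
        rw [← card_eq_sum_card_image]
    _ ≤ #(s.image f) * ∑ b ∈ s.image f, #{a ∈ s | f a = b} ^ 2 := sq_sum_le_card_mul_sum_sq
    _ = #(s.image f) * #{x ∈ s ×ˢ s | f x.1 = f x.2} := by rw [hfibres]

end Finset

namespace Nat

theorem card_filter_mul_eq_le_card_divisors (s t : Finset ℕ) {m : ℕ} (hm : m ≠ 0) :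
    #{xy ∈ s ×ˢ t | xy.1 * xy.2 = m} ≤ #m.divisors :=
  calc #{xy ∈ s ×ˢ t | xy.1 * xy.2 = m} ≤ #m.divisorsAntidiagonal :=
        card_le_card fun _ hxy => mem_divisorsAntidiagonal.2 ⟨(mem_filter.1 hxy).2, hm⟩
    _ = #m.divisors := by rw [← map_div_right_divisors, card_map]

theorem mulEnergy_le_mul_card_sq (A : Finset ℕ) (hA : 0 ∉ A) {D : ℝ}
    (hD : ∀ m ∈ A * A, (#m.divisors : ℝ) ≤ D) : (Eₘ[A] : ℝ) ≤ D * #A ^ 2 := by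
  have hr : ∀ m ∈ A * A, (#{xy ∈ A ×ˢ A | xy.1 * xy.2 = m} : ℝ) ≤ D := by
    intro m hm
    obtain ⟨a, ha, b, hb, rfl⟩ := mem_mul.1 hm
    have hab : a * b ≠ 0 :=
      mul_ne_zero (ne_of_mem_of_not_mem ha hA) (ne_of_mem_of_not_mem hb hA)
    exact (cast_le.2 (card_filter_mul_eq_le_card_divisors A A hab)).trans (hD _ hm)
  rw [mulEnergy_eq_sum_sq']
  push_cast
  calc ∑ m ∈ A * A, (#{xy ∈ A ×ˢ A | xy.1 * xy.2 = m} : ℝ) ^ 2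
      ≤ ∑ m ∈ A * A, (#{xy ∈ A ×ˢ A | xy.1 * xy.2 = m} : ℝ) * D :=
        sum_le_sum fun m hm => by
          rw [sq]
          exact mul_le_mul_of_nonneg_left (hr m hm) (by positivity)
    _ = D * #A ^ 2 := by
        rw [← sum_mul, ← cast_sum, ← card_eq_sum_card_fiberwise fun xy hxy =>
          mul_mem_mul (mem_product.1 hxy).1 (mem_product.1 hxy).2, card_product]
        push_cast
        ring

theorem card_filter_div_eq_le_mulEnergy (A : Finset ℕ) (hA : 0 ∉ A) :
    #{x ∈ (A ×ˢ A) ×ˢ (A ×ˢ A) | (x.1.1 : ℚ) / x.1.2 = (x.2.1 : ℚ) / x.2.2} ≤ Eₘ[A] := by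
  refine card_le_card_of_injOn (fun x => ((x.1.1, x.2.1), (x.2.2, x.1.2))) ?_ ?_
  · rintro ⟨⟨a, b⟩, ⟨c, d⟩⟩ hx
    simp only [coe_filter, mem_product, Set.mem_ofPred_eq] at hx
    obtain ⟨⟨⟨ha, hb⟩, hc, hd⟩, h⟩ := hx
    rw [div_eq_div_iff (cast_ne_zero.2 (ne_of_mem_of_not_mem hb hA))
      (cast_ne_zero.2 (ne_of_mem_of_not_mem hd hA))] at h
    simp only [coe_filter, mem_product, Set.mem_ofPred_eq]
    exact ⟨⟨⟨ha, hc⟩, hd, hb⟩, by exact_mod_cast h⟩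
  · rintro ⟨⟨a, b⟩, ⟨c, d⟩⟩ _ ⟨⟨a', b'⟩, ⟨c', d'⟩⟩ _ h
    simp only [Prod.mk.injEq] at h
    simp only [h]

theorem sq_card_le_card_image_div_mul (A : Finset ℕ) (hA : 0 ∉ A) {D : ℝ}
    (hD : ∀ m ∈ A * A, (#m.divisors : ℝ) ≤ D) :
    (#A : ℝ) ^ 2 ≤ #((A ×ˢ A).image fun p => (p.1 : ℚ) / p.2) * D := by
  rcases A.eq_empty_or_nonempty with rfl | hne
  · simp
  set S := (A ×ˢ A).image fun p => (p.1 : ℚ) / p.2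
  have hcs := sq_card_le_card_image_mul_card_filter (A ×ˢ A) fun p => (p.1 : ℚ) / p.2
  rw [card_product, ← sq] at hcs
  have key : (#A : ℝ) ^ 2 * #A ^ 2 ≤ #S * D * #A ^ 2 :=
    calc (#A : ℝ) ^ 2 * #A ^ 2 = ((#A ^ 2) ^ 2 : ℕ) := by push_cast; ring
      _ ≤ #S * (Eₘ[A] : ℝ) := by
          exact_mod_cast hcs.trans (Nat.mul_le_mul_left _ (card_filter_div_eq_le_mulEnergy A hA))
      _ ≤ #S * (D * #A ^ 2) := by
          gcongr
          exact mulEnergy_le_mul_card_sq A hA hD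
      _ = #S * D * #A ^ 2 := by ring
  exact le_of_mul_le_mul_right key (by positivity)

end Nat

theorem Real.natCast_add_one_le_pow_rpow_logb {y t : ℝ} (hy : 1 < y) (hyt : y ≤ t) (k : ℕ) :
    (k + 1 : ℝ) ≤ (t ^ k) ^ logb y 2 := by
  calc (k + 1 : ℝ) ≤ 2 ^ k := by exact_mod_cast Nat.lt_two_pow_self
    _ = (y ^ k) ^ logb y 2 := by
      rw [← rpow_pow_comm (by positivity), rpow_logb (by positivity) hy.ne' two_pos]
    _ ≤ (t ^ k) ^ logb y 2 := by
      gcongr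
      exact logb_nonneg hy one_le_two

namespace Nat

theorem factorization_add_one_le_one_add_logb {n p : ℕ} (hn : n ≠ 0) (hp : p.Prime) :
    (n.factorization p + 1 : ℝ) ≤ 1 + logb 2 n := by
  have h2k : 2 ^ n.factorization p ≤ n :=
    (Nat.pow_le_pow_left hp.two_le _).trans (ordProj_le p hn)
  have : (n.factorization p : ℝ) ≤ logb 2 n := by
    rw [le_logb_iff_rpow_le one_lt_two (by positivity), rpow_natCast]
    exact_mod_cast h2k
  linarith

theorem prod_factorization_add_one_le_of_le {n : ℕ} (hn : n ≠ 0) {y : ℝ} (hy : 0 ≤ y) :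
    ∏ p ∈ n.primeFactors with ((p : ℕ) : ℝ) ≤ y, (n.factorization p + 1 : ℝ) ≤
      (1 + logb 2 n) ^ y := by
  set Ps := n.primeFactors.filter fun p : ℕ => (p : ℝ) ≤ y
  have hbase : 1 ≤ 1 + logb 2 n :=
    le_add_of_nonneg_right (logb_nonneg one_lt_two (one_le_cast.2 (one_le_iff_ne_zero.2 hn)))
  have hcard : (#Ps : ℝ) ≤ y := by
    have hsub : Ps ⊆ Icc 1 ⌊y⌋₊ := fun p hp => by
      obtain ⟨hp, hpy⟩ := mem_filter.1 hp
      exact mem_Icc.2 ⟨(prime_of_mem_primeFactors hp).one_le, le_floor hpy⟩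
    calc (#Ps : ℝ) ≤ ⌊y⌋₊ := by exact_mod_cast (card_le_card hsub).trans (by simp)
      _ ≤ y := floor_le hy
  calc ∏ p ∈ Ps, (n.factorization p + 1 : ℝ) ≤ ∏ _p ∈ Ps, (1 + logb 2 n) :=
        prod_le_prod (fun _ _ => by positivity) fun p hp =>
          factorization_add_one_le_one_add_logb hn
            (prime_of_mem_primeFactors (mem_filter.1 hp).1)
    _ = (1 + logb 2 n) ^ (#Ps : ℝ) := by rw [prod_const, rpow_natCast]
    _ ≤ (1 + logb 2 n) ^ y := rpow_le_rpow_of_exponent_le hbase hcard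

theorem prod_factorization_add_one_le_of_lt {n : ℕ} (hn : n ≠ 0) {y : ℝ} (hy : 1 < y) :
    ∏ p ∈ n.primeFactors with y < ((p : ℕ) : ℝ), (n.factorization p + 1 : ℝ) ≤
      (n : ℝ) ^ logb y 2 := by
  set Pl := n.primeFactors.filter fun p : ℕ => y < p
  calc ∏ p ∈ Pl, (n.factorization p + 1 : ℝ)
        ≤ ∏ p ∈ Pl, ((p : ℝ) ^ n.factorization p) ^ logb y 2 :=
        prod_le_prod (fun _ _ => by positivity) fun p hp =>
          natCast_add_one_le_pow_rpow_logb hy (mem_filter.1 hp).2.le _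
    _ = (∏ p ∈ Pl, (p : ℝ) ^ n.factorization p) ^ logb y 2 :=
        finsetProd_rpow Pl (fun p => (p : ℝ) ^ n.factorization p) (fun _ _ => by positivity) _
    _ ≤ (n : ℝ) ^ logb y 2 := by
        refine rpow_le_rpow (by positivity) ?_ (logb_nonneg hy one_le_two)
        have : ∏ p ∈ Pl, p ^ n.factorization p ≤ n :=
          (prod_le_prod_of_subset_of_one_le' (filter_subset _ _) fun p hp _ =>
            one_le_pow₀ (prime_of_mem_primeFactors hp).one_le).trans_eq
            (prod_primeFactors_pow_factorization hn).symm
        exact_mod_cast this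

theorem card_divisors_le_one_add_logb_rpow_mul_rpow (n : ℕ) {y : ℝ} (hy : 1 < y) :
    (#n.divisors : ℝ) ≤ (1 + logb 2 n) ^ y * (n : ℝ) ^ logb y 2 := by
  rcases eq_or_ne n 0 with rfl | hn
  · simp [zero_rpow (logb_pos hy one_lt_two).ne']
  rw [card_divisors hn, ← prod_filter_mul_prod_filter_not _ fun p : ℕ => (p : ℝ) ≤ y]
  push_cast
  simp only [not_le]
  have hbase : 0 ≤ 1 + logb 2 n :=
    add_nonneg zero_le_one (logb_nonneg one_lt_two (one_le_cast.2 (one_le_iff_ne_zero.2 hn)))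
  exact mul_le_mul (prod_factorization_add_one_le_of_le hn (zero_lt_one.trans hy).le)
    (prod_factorization_add_one_le_of_lt hn hy) (by positivity) (rpow_nonneg hbase _)

end Nat

theorem Real.eventually_rpow_mul_log_le {θ c : ℝ} (hθ : θ < 1) (hc : 0 < c) :
    ∀ᶠ x : ℝ in atTop, x ^ θ * log (1 + x / log 2) ≤ c * (x / log x) := by
  have hlittle := (isLittleO_log_rpow_rpow_atTop 2 (sub_pos.2 hθ)).def (half_pos hc)
  filter_upwards [hlittle, eventually_ge_atTop 3] with x hx hx3
  have hx0 : 0 < x := by linarith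
  have hlogx : 0 < log x := log_pos (by linarith)
  rw [norm_of_nonneg (by positivity), norm_of_nonneg (by positivity), rpow_two] at hx
  -- `log 2 > 1/2`, so `1 + x / log 2 ≤ 1 + 2 x ≤ x ^ 2`
  have hlog : log (1 + x / log 2) ≤ 2 * log x := by
    have h2 : x / log 2 ≤ 2 * x := by
      rw [div_le_iff₀ (log_pos one_lt_two)]
      nlinarith [log_two_gt_d9]
    calc log (1 + x / log 2) ≤ log (x ^ 2) := log_le_log (by positivity) (by nlinarith)
      _ = 2 * log x := by rw [log_pow]; norm_num
  rw [mul_div_assoc', le_div_iff₀ hlogx]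
  calc x ^ θ * log (1 + x / log 2) * log x ≤ x ^ θ * (2 * log x) * log x := by gcongr
    _ = 2 * x ^ θ * log x ^ 2 := by ring
    _ ≤ 2 * x ^ θ * (c / 2 * x ^ (1 - θ)) := by gcongr
    _ = c * x := by
        rw [mul_mul_mul_comm, ← rpow_add hx0, add_sub_cancel, rpow_one]
        ring

theorem eventually_forall_card_divisors_le {ε : ℝ} (hε : 0 < ε) :
    ∀ᶠ Q : ℝ in atTop, ∀ n : ℕ, n ≠ 0 → (n : ℝ) ≤ Q →
      (#n.divisors : ℝ) ≤ exp ((log 2 + ε) * (log Q / log (log Q))) := by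
  have hlog2 : 0 < log 2 := log_pos one_lt_two
  set θ := log 2 / (log 2 + ε / 2)
  have hθ0 : 0 < θ := by positivity
  have hθ1 : θ < 1 := (div_lt_one (by positivity)).2 (by linarith)
  have hθ : log 2 / θ = log 2 + ε / 2 := div_div_cancel₀ hlog2.ne'
  filter_upwards [tendsto_log_atTop.eventually (eventually_rpow_mul_log_le hθ1 (half_pos hε)),
    tendsto_log_atTop.eventually_gt_atTop 1] with Q hsmall hQ n hn hnQ
  have hn1 : (1 : ℝ) ≤ n := Nat.one_le_cast.2 (Nat.one_le_iff_ne_zero.2 hn)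
  have hQ0 : 0 < Q := by linarith
  have hy : 1 < log Q ^ θ := one_lt_rpow hQ hθ0
  have hlogb : 0 ≤ logb (log Q ^ θ) 2 := logb_nonneg hy one_le_two
  have hbase : 1 ≤ 1 + logb 2 n := le_add_of_nonneg_right (logb_nonneg one_lt_two hn1)
  have hnQ' : logb 2 n ≤ logb 2 Q := logb_le_logb_of_le one_lt_two (by linarith) hnQ
  calc (#n.divisors : ℝ) ≤ (1 + logb 2 n) ^ log Q ^ θ * (n : ℝ) ^ logb (log Q ^ θ) 2 :=
        Nat.card_divisors_le_one_add_logb_rpow_mul_rpow n hy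
    _ ≤ (1 + logb 2 Q) ^ log Q ^ θ * Q ^ logb (log Q ^ θ) 2 := by
        gcongr ?_ * ?_
        · exact rpow_nonneg (by linarith) _
        · exact rpow_le_rpow (by linarith) (by linarith) (zero_le_one.trans hy.le)
        · exact rpow_le_rpow (by positivity) hnQ hlogb
    _ = exp (log Q ^ θ * log (1 + log Q / log 2) + log 2 / θ * (log Q / log (log Q))) := by
        rw [rpow_def_of_pos (by linarith), rpow_def_of_pos hQ0, ← exp_add, logb, logb,
          log_rpow (by linarith)]
        congr 1
        field_simp
    _ ≤ exp ((log 2 + ε) * (log Q / log (log Q))) := by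
        rw [hθ]
        gcongr
        linarith

theorem eventually_forall_card_divisors_mul_le {ε : ℝ} (hε : 0 < ε) :
    ∀ᶠ Q : ℝ in atTop, ∀ a b : ℕ, a ≠ 0 → b ≠ 0 → (a : ℝ) ≤ Q → (b : ℝ) ≤ Q →
      (#(a * b).divisors : ℝ) ≤ exp ((2 * log 2 + ε) * (log Q / log (log Q))) := by
  filter_upwards [(tendsto_pow_atTop two_ne_zero).eventually
    (eventually_forall_card_divisors_le (half_pos hε)),
    tendsto_log_atTop.eventually_gt_atTop 1] with Q hdiv hQ a b ha hb haQ hbQ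
  have hL : log (Q ^ 2) / log (log (Q ^ 2)) ≤ 2 * (log Q / log (log Q)) := by
    rw [log_pow, Nat.cast_ofNat, mul_div_assoc]
    gcongr
    · exact log_pos hQ
    · linarith
  calc (#(a * b).divisors : ℝ)
      ≤ exp ((log 2 + ε / 2) * (log (Q ^ 2) / log (log (Q ^ 2)))) := by
        refine hdiv _ (mul_ne_zero ha hb) ?_
        rw [Nat.cast_mul, sq]
        exact mul_le_mul haQ hbQ (Nat.cast_nonneg _) ((Nat.cast_nonneg _).trans haQ)
    _ ≤ exp ((log 2 + ε / 2) * (2 * (log Q / log (log Q)))) := by gcongr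
    _ = exp ((2 * log 2 + ε) * (log Q / log (log Q))) := by ring_nf

/-- For every ε > 0 there exists Q₀ such that for all real Q ≥ Q₀ and every nonempty
finite set A of positive integers contained in [1, Q], the quotient set A/A ⊆ ℚ
satisfies |A/A| ≥ |A|²·exp((−2·log 2 − ε)·(log Q)/(log log Q)). -/
theorem stmt_5 :
    ∀ ε : ℝ, 0 < ε → ∃ Q₀ : ℝ, ∀ Q : ℝ, Q₀ ≤ Q →
      ∀ A : Finset ℕ, A.Nonempty → (∀ a ∈ A, 0 < a ∧ (a : ℝ) ≤ Q) →
        (((A ×ˢ A).image (fun p => (p.1 : ℚ) / (p.2 : ℚ))).card : ℝ) ≥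
          (A.card : ℝ) ^ 2 *
            Real.exp ((-2 * Real.log 2 - ε) *
              (Real.log Q / Real.log (Real.log Q))) := by
  intro ε hε
  obtain ⟨Q₀, hQ₀⟩ := (eventually_forall_card_divisors_mul_le hε).exists_forall_of_atTop
  refine ⟨Q₀, fun Q hQ A _ hA => ?_⟩
  have hD : ∀ m ∈ A * A,
      (#m.divisors : ℝ) ≤ exp ((2 * log 2 + ε) * (log Q / log (log Q))) := by
    intro m hm
    obtain ⟨a, ha, b, hb, rfl⟩ := mem_mul.1 hm
    exact hQ₀ Q hQ a b (hA a ha).1.ne' (hA b hb).1.ne' (hA a ha).2 (hA b hb).2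
  have hcard := Nat.sq_card_le_card_image_div_mul A (fun h0 => (hA 0 h0).1.false) hD
  rw [ge_iff_le, show -2 * log 2 - ε = -(2 * log 2 + ε) by ring, neg_mul, exp_neg,
    ← div_eq_mul_inv, div_le_iff₀ (exp_pos _)]
  exact hcard
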